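/- arXiv:1403.1224 — 3 statements merged into one kernel-verified Lean document; each statement's English description precedes it below -/
import Mathlib

section
/- For every ε ∈ (0,1], the family {ψ^{ε}_{(n,m)} : n,m ∈ ℤ} is a tight frame for L²(ℝ) with frame constant 2·χ·sinh(ε·L)/ε; that is, for every f ∈ L²(ℝ) one has ∑_{n∈ℤ} ∑_{m∈ℤ} |⟨ψ^{ε}_{(n,m)}, f⟩|² = (2·χ·sinh(ε·L)/ε)·‖f‖²_{L²(ℝ)}. -/
open MeasureTheory Filter Topology Set ComplexConjugate

/-!
The substitution `t = exp (-ε y)` maps `[-L, L)` onto the interval `(exp (-ε L), exp (ε L)]` of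
length `T = 2 sinh (ε L)`, and turns the chirps `exp (i b β_{mn} exp (-ε x))` into the Fourier
characters `exp (2π i m t / T)` of that interval, the constant phases `exp (i a γ_{mn})` being
unimodular. For fixed `n`, Parseval's identity on this interval therefore gives
`∑_m |⟪ψ^ε_{(n,m)}, f⟫|² = (T / ε) ∫ |ψ (x + n q₀)|² |f x|² dx`, and summing over `n` with
`∑_n |ψ (x + n q₀)|² = χ` (Tonelli) gives `(T χ / ε) ‖f‖²`.
-/

theorem MeasureTheory.L2.norm_sq_eq_integral_norm_sq {α 𝕜 : Type*} [MeasurableSpace α]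
    {μ : Measure α} [RCLike 𝕜] (f : Lp 𝕜 2 μ) : ‖f‖ ^ 2 = ∫ x, ‖f x‖ ^ 2 ∂μ := by
  rw [norm_sq_eq_re_inner (𝕜 := 𝕜), L2.inner_def, ← integral_re (L2.integrable_inner f f)]
  simp_rw [inner_self_eq_norm_sq]

theorem MeasureTheory.L2.inner_eq_integral_conj_mul_of_ae_eq {α 𝕜 : Type*} [MeasurableSpace α]
    {μ : Measure α} [RCLike 𝕜] {g : Lp 𝕜 2 μ} {φ : α → 𝕜} (hg : g =ᵐ[μ] φ) (f : Lp 𝕜 2 μ) :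
    inner 𝕜 g f = ∫ x, conj (φ x) * f x ∂μ := by
  rw [L2.inner_def]
  refine integral_congr_ae ?_
  filter_upwards [hg] with x hx
  rw [hx, RCLike.inner_apply']

theorem ae_notMem_Ico_imp_eq_zero {M : Type*} [Zero M] {L : ℝ} {φ : ℝ → M}
    (h : ∀ᵐ x, L < |x| → φ x = 0) : ∀ᵐ x, x ∉ Ico (-L) L → φ x = 0 := by
  filter_upwards [h, Measure.ae_ne volume L] with x hx hxL hxIco
  refine hx ?_
  rw [mem_Ico, not_and_or, not_le, not_lt] at hxIco
  rcases hxIco with hlt | hle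
  · exact lt_of_lt_of_le (by linarith) (neg_le_abs x)
  · exact lt_of_lt_of_le (lt_of_le_of_ne hle (Ne.symm hxL)) (le_abs_self x)

theorem conj_exp_I_mul_eq_fourier {b : ℝ} (hb : b ≠ 0) (c s t : ℝ) (m : ℤ) :
    conj (Complex.exp (Complex.I * ↑(b * (-s * Real.pi * m / (b * c)) * t)))
      = fourier m ((s * t : ℝ) : AddCircle (2 * c)) := by
  rw [fourier_coe_apply, ← Complex.exp_conj]
  -- for `c = 0` both exponents are junk divisions by zero, so both sides are `exp 0`
  rcases eq_or_ne c 0 with rfl | hc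
  · simp
  have hb' : (b : ℂ) ≠ 0 := mod_cast hb
  congr 1
  push_cast
  simp only [map_mul, Complex.conj_I, Complex.conj_ofReal, map_div₀, map_neg, map_intCast]
  field_simp

theorem integrable_mul_of_hasSum {α ι : Type*} [MeasurableSpace α] {μ : Measure α}
    {g : ι → α → ℝ} {c : ℝ} (hg_nonneg : ∀ i x, 0 ≤ g i x)
    (hg_meas : ∀ i, AEStronglyMeasurable (g i) μ) (hg_sum : ∀ᵐ x ∂μ, HasSum (g · x) c)
    {h : α → ℝ} (hh : Integrable h μ) (i : ι) : Integrable (fun x => g i x * h x) μ := by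
  refine hh.bdd_mul (c := c) (hg_meas i) ?_
  filter_upwards [hg_sum] with x hx
  rw [Real.norm_of_nonneg (hg_nonneg i x)]
  exact le_hasSum hx i fun j _ => hg_nonneg j x

theorem tsum_integral_mul_eq_of_hasSum {α ι : Type*} [MeasurableSpace α] {μ : Measure α}
    [Countable ι] {g : ι → α → ℝ} {c : ℝ} (hg_nonneg : ∀ i x, 0 ≤ g i x)
    (hg_meas : ∀ i, AEStronglyMeasurable (g i) μ) (hg_sum : ∀ᵐ x ∂μ, HasSum (g · x) c)
    {h : α → ℝ} (hh : Integrable h μ) :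
    ∑' i, ∫ x, g i x * h x ∂μ = c * ∫ x, h x ∂μ := by
  have hsum_enorm : ∀ᵐ x ∂μ, ∑' i, ‖g i x * h x‖ₑ = ENNReal.ofReal c * ‖h x‖ₑ := by
    filter_upwards [hg_sum] with x hx
    simp_rw [enorm_mul, ENNReal.tsum_mul_right, Real.enorm_of_nonneg (hg_nonneg _ x),
      ← ENNReal.ofReal_tsum_of_nonneg (hg_nonneg · x) hx.summable,
      hx.tsum_eq]
  have hmeas (i : ι) : AEStronglyMeasurable (fun x => g i x * h x) μ :=
    (hg_meas i).mul hh.aestronglyMeasurable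
  have hfinite : ∑' i, ∫⁻ x, ‖g i x * h x‖ₑ ∂μ ≠ ⊤ := by
    rw [← lintegral_tsum fun i => (hmeas i).enorm, lintegral_congr_ae hsum_enorm]
    rw [lintegral_const_mul' _ _ ENNReal.ofReal_ne_top]
    exact ENNReal.mul_ne_top ENNReal.ofReal_ne_top hh.hasFiniteIntegral.ne
  rw [← integral_tsum hmeas hfinite, ← integral_const_mul]
  refine integral_congr_ae ?_
  filter_upwards [hg_sum] with x hx
  rw [tsum_mul_right, hx.tsum_eq]

theorem tsum_norm_sq_setIntegral_fourier_mul {a b : ℝ} (hab : a < b) {H : ℝ → ℂ}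
    (hH : MemLp H 2 (volume.restrict (Ioc a b))) :
    ∑' m : ℤ, ‖∫ t in Ioc a b, fourier m (t : AddCircle (b - a)) * H t‖ ^ 2
      = (b - a) * ∫ t in Ioc a b, ‖H t‖ ^ 2 := by
  have hba : 0 < b - a := sub_pos.2 hab
  have hcoeff (m : ℤ) : ∫ t in Ioc a b, fourier m (t : AddCircle (b - a)) * H t
      = (b - a) • fourierCoeffOn hab H (-m) := by
    rw [fourierCoeffOn_eq_integral, neg_neg, smul_smul, mul_one_div_cancel hba.ne', one_smul,
      intervalIntegral.integral_of_le hab.le]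
    rfl
  calc ∑' m : ℤ, ‖∫ t in Ioc a b, fourier m (t : AddCircle (b - a)) * H t‖ ^ 2
      = (b - a) ^ 2 * ∑' m : ℤ, ‖fourierCoeffOn hab H (-m)‖ ^ 2 := by
        simp_rw [hcoeff, norm_smul, mul_pow, Real.norm_of_nonneg hba.le]
        exact tsum_mul_left
    _ = (b - a) * ∫ t in Ioc a b, ‖H t‖ ^ 2 := by
        have hneg : ∑' m : ℤ, ‖fourierCoeffOn hab H (-m)‖ ^ 2
            = ∑' m : ℤ, ‖fourierCoeffOn hab H m‖ ^ 2 :=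
          (Equiv.neg ℤ).tsum_eq (fun m => ‖fourierCoeffOn hab H m‖ ^ 2)
        rw [hneg, tsum_sq_fourierCoeffOn hab hH, intervalIntegral.integral_of_le hab.le,
          smul_eq_mul]
        field_simp

section ExpChangeOfVariables

variable {E : Type*} [NormedAddCommGroup E] [NormedSpace ℝ E] {ε L : ℝ}

theorem image_exp_neg_mul_Ico (hε : 0 < ε) (hL : 0 ≤ L) :
    (fun y => Real.exp (-(ε * y))) '' Ico (-L) L
      = Ioc (Real.exp (-(ε * L))) (Real.exp (ε * L)) := by
  have hanti : StrictAnti fun y => Real.exp (-(ε * y)) :=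
    Real.exp_strictMono.comp_strictAnti fun x y hxy => by nlinarith
  rw [ContinuousOn.image_Ico_of_strictAntiOn (by linarith) (by fun_prop) (hanti.strictAntiOn _)]
  simp

theorem hasDerivAt_exp_neg_mul (ε y : ℝ) :
    HasDerivAt (fun y => Real.exp (-(ε * y))) (-(ε * Real.exp (-(ε * y)))) y := by
  simpa [mul_comm] using ((hasDerivAt_id y).const_mul ε).neg.exp

theorem injective_exp_neg_mul (hε : ε ≠ 0) : Function.Injective fun y => Real.exp (-(ε * y)) :=
  Real.exp_injective.comp (neg_injective.comp (mul_right_injective₀ hε))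

theorem integrableOn_Ioc_exp_iff (hε : 0 < ε) (hL : 0 ≤ L) (F : ℝ → E) :
    IntegrableOn F (Ioc (Real.exp (-(ε * L))) (Real.exp (ε * L)))
      ↔ IntegrableOn (fun y => (ε * Real.exp (-(ε * y))) • F (Real.exp (-(ε * y))))
          (Ico (-L) L) := by
  rw [← image_exp_neg_mul_Ico hε hL, integrableOn_image_iff_integrableOn_abs_deriv_smul
    measurableSet_Ico (fun y _ => (hasDerivAt_exp_neg_mul ε y).hasDerivWithinAt)
    (injective_exp_neg_mul hε.ne').injOn]
  simp only [abs_neg, abs_of_pos (mul_pos hε (Real.exp_pos _))]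

theorem setIntegral_Ioc_exp_eq (hε : 0 < ε) (hL : 0 ≤ L) (F : ℝ → E) :
    ∫ t in Ioc (Real.exp (-(ε * L))) (Real.exp (ε * L)), F t
      = ∫ y in Ico (-L) L, (ε * Real.exp (-(ε * y))) • F (Real.exp (-(ε * y))) := by
  rw [← image_exp_neg_mul_Ico hε hL, integral_image_eq_integral_abs_deriv_smul
    measurableSet_Ico (fun y _ => (hasDerivAt_exp_neg_mul ε y).hasDerivWithinAt)
    (injective_exp_neg_mul hε.ne').injOn]
  simp only [abs_neg, abs_of_pos (mul_pos hε (Real.exp_pos _))]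

theorem tsum_norm_sq_setIntegral_fourier_exp_neg_mul (hε : 0 < ε) (hL : 0 < L) {P : ℝ → ℂ}
    (hP : Measurable P)
    (hPint : IntegrableOn (fun y => Real.exp (ε * y) * ‖P y‖ ^ 2) (Ico (-L) L)) :
    ∑' m : ℤ, ‖∫ y in Ico (-L) L,
        fourier m (Real.exp (-(ε * y)) : AddCircle (2 * Real.sinh (ε * L))) * P y‖ ^ 2
      = 2 * Real.sinh (ε * L) / ε * ∫ y in Ico (-L) L, Real.exp (ε * y) * ‖P y‖ ^ 2 := by
  rw [show 2 * Real.sinh (ε * L) = Real.exp (ε * L) - Real.exp (-(ε * L)) by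
    rw [Real.sinh_eq]; ring]
  -- `H` is `P` pushed forward along `t = exp (-ε y)`, divided by the Jacobian `ε t`.
  set H : ℝ → ℂ := fun t => ((ε * t : ℝ) : ℂ)⁻¹ * P (-Real.log t / ε)
  have hH_exp (y : ℝ) : H (Real.exp (-(ε * y))) = ((ε * Real.exp (-(ε * y)) : ℝ) : ℂ)⁻¹ * P y := by
    simp only [H, Real.log_exp]
    congr 2
    field_simp
  have hjac_pos (y : ℝ) : 0 < ε * Real.exp (-(ε * y)) := mul_pos hε (Real.exp_pos _)
  have hH_sq (y : ℝ) : (ε * Real.exp (-(ε * y))) • ‖H (Real.exp (-(ε * y)))‖ ^ 2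
      = ε⁻¹ * (Real.exp (ε * y) * ‖P y‖ ^ 2) := by
    rw [hH_exp, norm_mul, norm_inv, Complex.norm_real, Real.norm_of_nonneg (hjac_pos y).le,
      smul_eq_mul, Real.exp_neg]
    field_simp
  have hH_meas : Measurable H := by
    fun_prop
  have hH : MemLp H 2 (volume.restrict (Ioc (Real.exp (-(ε * L))) (Real.exp (ε * L)))) := by
    rw [memLp_two_iff_integrable_sq_norm hH_meas.aestronglyMeasurable]
    refine (integrableOn_Ioc_exp_iff hε hL.le _).2 ?_
    simp_rw [hH_sq]
    exact hPint.const_mul _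
  have hlt : Real.exp (-(ε * L)) < Real.exp (ε * L) := by
    gcongr; nlinarith
  have hcoeff (m : ℤ) :
      ∫ t in Ioc (Real.exp (-(ε * L))) (Real.exp (ε * L)),
          fourier m (t : AddCircle (Real.exp (ε * L) - Real.exp (-(ε * L)))) * H t
        = ∫ y in Ico (-L) L,
          fourier m (Real.exp (-(ε * y)) : AddCircle (Real.exp (ε * L) - Real.exp (-(ε * L))))
            * P y := by
    rw [setIntegral_Ioc_exp_eq hε hL.le]
    refine setIntegral_congr_fun measurableSet_Ico fun y _ => ?_
    have hjac : ((ε * Real.exp (-(ε * y)) : ℝ) : ℂ) ≠ 0 := mod_cast (hjac_pos y).ne'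
    rw [hH_exp, Complex.real_smul]
    field_simp
  have hnorm : ∫ t in Ioc (Real.exp (-(ε * L))) (Real.exp (ε * L)), ‖H t‖ ^ 2
      = ε⁻¹ * ∫ y in Ico (-L) L, Real.exp (ε * y) * ‖P y‖ ^ 2 := by
    rw [setIntegral_Ioc_exp_eq hε hL.le, ← integral_const_mul]
    simp_rw [hH_sq]
  simp_rw [← hcoeff, tsum_norm_sq_setIntegral_fourier_mul hlt hH, hnorm, div_eq_mul_inv, mul_assoc]

end ExpChangeOfVariables

section ChirpFrame

variable {ε L q b : ℝ} {ψ f : Lp ℂ 2 (volume : Measure ℝ)}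

theorem inner_eq_exp_mul_setIntegral_fourier (hb : b ≠ 0)
    (hsupp : ∀ᵐ y, y ∉ Ico (-L) L → ψ y = 0) {g : Lp ℂ 2 (volume : Measure ℝ)} {α : ℝ}
    {n m : ℤ} (hg : g =ᵐ[volume] fun x : ℝ =>
      Complex.exp (Complex.I * ↑α) *
      Complex.exp (Complex.I * ↑(b * (-Real.exp (-(ε * n * q)) * Real.pi * m
        / (b * Real.sinh (ε * L))) * Real.exp (-(ε * x)))) *
      ↑(Real.exp (-(ε * (x + n * q) / 2))) * ψ (x + n * q)) :
    inner ℂ g f = Complex.exp (-(Complex.I * ↑α)) * ∫ y in Ico (-L) L,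
      fourier m (Real.exp (-(ε * y)) : AddCircle (2 * Real.sinh (ε * L)))
        * (↑(Real.exp (-(ε * y / 2))) * (conj (ψ y) * f (y - n * q))) := by
  set P : ℝ → ℂ := fun y => fourier m (Real.exp (-(ε * y)) : AddCircle (2 * Real.sinh (ε * L)))
    * (↑(Real.exp (-(ε * y / 2))) * (conj (ψ y) * f (y - n * q)))
  have hpt (x : ℝ) : conj (Complex.exp (Complex.I * ↑α) *
      Complex.exp (Complex.I * ↑(b * (-Real.exp (-(ε * n * q)) * Real.pi * m
        / (b * Real.sinh (ε * L))) * Real.exp (-(ε * x)))) *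
      ↑(Real.exp (-(ε * (x + n * q) / 2))) * ψ (x + n * q)) * f x
      = Complex.exp (-(Complex.I * ↑α)) * P (x + n * q) := by
    rw [map_mul, map_mul, map_mul, conj_exp_I_mul_eq_fourier hb, ← Real.exp_add,
      ← Complex.exp_conj, map_mul, Complex.conj_I, Complex.conj_ofReal, Complex.conj_ofReal]
    simp only [P, add_sub_cancel_right]
    ring_nf
  rw [L2.inner_eq_integral_conj_mul_of_ae_eq hg, integral_congr_ae (ae_of_all _ hpt),
    integral_const_mul, integral_add_right_eq_self P, setIntegral_eq_integral_of_ae_compl_eq_zero]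
  filter_upwards [hsupp] with y hy hyL
  simp [hy hyL]

theorem exp_mul_norm_sq_eq_norm_sq_mul_norm_sq (ε y : ℝ) (z w : ℂ) :
    Real.exp (ε * y) * ‖(↑(Real.exp (-(ε * y / 2))) : ℂ) * (conj z * w)‖ ^ 2
      = ‖z‖ ^ 2 * ‖w‖ ^ 2 := by
  rw [norm_mul, norm_mul, Complex.norm_real, Real.norm_of_nonneg (Real.exp_pos _).le,
    RCLike.norm_conj, mul_pow, mul_pow, ← Real.exp_nat_mul, ← mul_assoc, ← Real.exp_add]
  have : ε * y + (2 : ℕ) * -(ε * y / 2) = 0 := by push_cast; ring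
  rw [this, Real.exp_zero, one_mul]

theorem tsum_norm_sq_inner_eq_integral (hε : 0 < ε) (hL : 0 < L) (hb : b ≠ 0)
    (hsupp : ∀ᵐ y, y ∉ Ico (-L) L → ψ y = 0) (n : ℤ)
    (hint : Integrable fun x => ‖ψ (x + n * q)‖ ^ 2 * ‖f x‖ ^ 2)
    {g : ℤ → Lp ℂ 2 (volume : Measure ℝ)} (α : ℤ → ℝ)
    (hg : ∀ m : ℤ, g m =ᵐ[volume] fun x : ℝ =>
      Complex.exp (Complex.I * ↑(α m)) *
      Complex.exp (Complex.I * ↑(b * (-Real.exp (-(ε * n * q)) * Real.pi * m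
        / (b * Real.sinh (ε * L))) * Real.exp (-(ε * x)))) *
      ↑(Real.exp (-(ε * (x + n * q) / 2))) * ψ (x + n * q)) :
    ∑' m : ℤ, ‖inner ℂ (g m) f‖ ^ 2
      = 2 * Real.sinh (ε * L) / ε * ∫ x, ‖ψ (x + n * q)‖ ^ 2 * ‖f x‖ ^ 2 := by
  set P : ℝ → ℂ := fun y => ↑(Real.exp (-(ε * y / 2))) * (conj (ψ y) * f (y - n * q))
  have hP : Measurable P := by
    have hψ_meas := (Lp.stronglyMeasurable ψ).measurable
    have hf_meas := (Lp.stronglyMeasurable f).measurable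
    fun_prop
  have hPsq (y : ℝ) : Real.exp (ε * y) * ‖P y‖ ^ 2 = ‖ψ y‖ ^ 2 * ‖f (y - n * q)‖ ^ 2 :=
    exp_mul_norm_sq_eq_norm_sq_mul_norm_sq ε y _ _
  have hint' : Integrable fun y => ‖ψ y‖ ^ 2 * ‖f (y - n * q)‖ ^ 2 := by
    simpa using hint.comp_sub_right (n * q)
  have hnorm (m : ℤ) : ‖inner ℂ (g m) f‖
      = ‖∫ y in Ico (-L) L,
          fourier m (Real.exp (-(ε * y)) : AddCircle (2 * Real.sinh (ε * L))) * P y‖ := by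
    have hunit : ‖Complex.exp (-(Complex.I * ↑(α m)))‖ = 1 := by simp [Complex.norm_exp]
    rw [inner_eq_exp_mul_setIntegral_fourier hb hsupp (hg m), norm_mul, hunit, one_mul]
  simp_rw [hnorm]
  rw [tsum_norm_sq_setIntegral_fourier_exp_neg_mul hε hL hP
    (by simpa only [hPsq] using hint'.integrableOn)]
  simp_rw [hPsq]
  rw [setIntegral_eq_integral_of_ae_compl_eq_zero, ← integral_add_right_eq_self _ (n * q)]
  · simp only [add_sub_cancel_right]
  · filter_upwards [hsupp] with y hy hyL
    simp [hy hyL]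

end ChirpFrame

theorem frames_extended_affine_tight_general
    (A L q₀ χ : ℝ)
    (hL : 0 < L) (hχ : 0 < χ)
    (ψ : Lp ℂ 2 (volume : Measure ℝ))
    (hsupp : ∀ᵐ x : ℝ ∂volume, L < |x| → ψ x = 0)
    (hχsum : ∀ᵐ x : ℝ ∂volume, ∑' n : ℤ, ‖ψ (x + n * q₀)‖ ^ 2 = χ)
    (a₀ b₀ : ℝ)
    (hb : ∀ ε ∈ Set.Ioc (0:ℝ) 1, b₀ - A / ε ≠ 0)
    (β γ : ℝ → ℤ → ℤ → ℝ)
    (hβ : ∀ (ε : ℝ) (n m : ℤ), β ε n m =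
      -Real.exp (-(ε * n * q₀)) * Real.pi * m / ((b₀ - A / ε) * Real.sinh (ε * L)))
    (ψe : ℝ → ℤ → ℤ → Lp ℂ 2 (volume : Measure ℝ))
    (hψe : ∀ ε ∈ Set.Ioc (0:ℝ) 1, ∀ n m : ℤ, ⇑(ψe ε n m) =ᵐ[volume] fun x : ℝ =>
      Complex.exp (Complex.I * Complex.ofReal ((a₀ + A / ε) * γ ε n m)) *
      Complex.exp (Complex.I * Complex.ofReal ((b₀ - A / ε) * β ε n m * Real.exp (-(ε * x)))) *
      Complex.ofReal (Real.exp (-(ε * (x + n * q₀) / 2))) *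
      ψ (x + n * q₀))
    (ε : ℝ) (hε : ε ∈ Set.Ioc (0:ℝ) 1)
    (f : Lp ℂ 2 (volume : Measure ℝ)) :
    ∑' n : ℤ, ∑' m : ℤ, ‖(inner ℂ (ψe ε n m) f : ℂ)‖ ^ 2
      = 2 * χ * Real.sinh (ε * L) / ε * ‖f‖ ^ 2 := by
  have hsupp' := ae_notMem_Ico_imp_eq_zero hsupp
  have hψ_meas : Measurable ψ := (Lp.stronglyMeasurable ψ).measurable
  have hwindow_meas (n : ℤ) :
      AEStronglyMeasurable (fun x : ℝ => ‖ψ (x + n * q₀)‖ ^ 2) volume :=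
    (by fun_prop : Measurable fun x : ℝ => ‖ψ (x + n * q₀)‖ ^ 2).aestronglyMeasurable
  have hwindow_sum : ∀ᵐ x : ℝ, HasSum (fun n : ℤ => ‖ψ (x + n * q₀)‖ ^ 2) χ := by
    filter_upwards [hχsum] with x hx
    have hsummable : Summable fun n : ℤ => ‖ψ (x + n * q₀)‖ ^ 2 := by
      by_contra h
      exact hχ.ne' (hx ▸ tsum_eq_zero_of_not_summable h)
    exact hx ▸ hsummable.hasSum
  have hf_sq : Integrable fun x : ℝ => ‖f x‖ ^ 2 :=
    (memLp_two_iff_integrable_sq_norm (Lp.aestronglyMeasurable f)).1 (Lp.memLp f)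
  have hrow (n : ℤ) := tsum_norm_sq_inner_eq_integral hε.1 hL (hb ε hε) hsupp' n
    (integrable_mul_of_hasSum (fun _ _ => by positivity) hwindow_meas hwindow_sum hf_sq n)
    (fun m => (a₀ + A / ε) * γ ε n m) fun m => by simpa only [hβ] using hψe ε hε n m
  rw [tsum_congr hrow, tsum_mul_left, tsum_integral_mul_eq_of_hasSum (fun _ _ => by positivity)
    hwindow_meas hwindow_sum hf_sq, L2.norm_sq_eq_integral_norm_sq]
  ring

theorem frames_extended_affine_tight
    (A B L q₀ p₀ χ : ℝ)
    (hA : A ≠ 0) (hL : 0 < L) (hq₀ : q₀ ≠ 0) (hχ : 0 < χ)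
    (hp₀ : p₀ = Real.pi / (A * L))
    (hq₀p₀ : |q₀ * p₀| < 2 * Real.pi)
    (ψ : Lp ℂ 2 (volume : Measure ℝ)) (hψ : ψ ≠ 0)
    (hsupp : ∀ᵐ x : ℝ ∂volume, L < |x| → ψ x = 0)
    (hχsum : ∀ᵐ x : ℝ ∂volume, ∑' n : ℤ, ‖ψ (x + n * q₀)‖ ^ 2 = χ)
    (a₀ b₀ : ℝ) (hab : a₀ + b₀ = B)
    (hb : ∀ ε ∈ Set.Ioc (0:ℝ) 1, b₀ - A / ε ≠ 0)
    (β γ : ℝ → ℤ → ℤ → ℝ)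
    (hβ : ∀ (ε : ℝ) (n m : ℤ), β ε n m =
      -Real.exp (-(ε * n * q₀)) * Real.pi * m / ((b₀ - A / ε) * Real.sinh (ε * L)))
    (hγ : ∀ (ε : ℝ) (n m : ℤ), n ≠ 0 → γ ε n m =
      β ε n m * (ε * n * q₀) / (1 - Real.exp (-(ε * n * q₀))))
    (hγ₀ : ∀ (ε : ℝ) (m : ℤ), γ ε 0 m = β ε 0 m)
    (ψe : ℝ → ℤ → ℤ → Lp ℂ 2 (volume : Measure ℝ))
    (hψe : ∀ ε ∈ Set.Ioc (0:ℝ) 1, ∀ n m : ℤ, ⇑(ψe ε n m) =ᵐ[volume] fun x : ℝ =>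
      Complex.exp (Complex.I * Complex.ofReal ((a₀ + A / ε) * γ ε n m)) *
      Complex.exp (Complex.I * Complex.ofReal ((b₀ - A / ε) * β ε n m * Real.exp (-(ε * x)))) *
      Complex.ofReal (Real.exp (-(ε * (x + n * q₀) / 2))) *
      ψ (x + n * q₀))
    (ε : ℝ) (hε : ε ∈ Set.Ioc (0:ℝ) 1)
    (f : Lp ℂ 2 (volume : Measure ℝ)) :
    ∑' n : ℤ, ∑' m : ℤ, ‖(inner ℂ (ψe ε n m) f : ℂ)‖ ^ 2
      = 2 * χ * Real.sinh (ε * L) / ε * ‖f‖ ^ 2 :=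
  frames_extended_affine_tight_general A L q₀ χ hL hχ ψ hsupp hχsum a₀ b₀ hb β γ hβ ψe hψe ε hε f
end

section
/- For every f ∈ L²(ℝ) and all integers N₁ ≤ N₂ and M₁ ≤ M₂, the truncated frame expansions contract: lim_{ε→0⁺} ∑_{n=N₁}^{N₂} ∑_{m=M₁}^{M₂} (ε/(2·χ·sinh(ε·L)))·⟨ψ^{ε}_{(n,m)}, f⟩·ψ^{ε}_{(n,m)} = ∑_{n=N₁}^{N₂} ∑_{m=M₁}^{M₂} (1/(2·χ·L))·⟨ψ^{A,B}_{(n,m)}, f⟩·ψ^{A,B}_{(n,m)}, the limit holding in the norm of L²(ℝ). -/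
/-!
Every truncated expansion is a finite sum, so it suffices that each contracted element
`ψ^ε_{(n,m)}` tends to `ψ^{A,B}_{(n,m)}` in `L²` and that `ε / sinh (ε L) → 1 / L`.

Pointwise, the phase `a(ε) γ + b(ε) β e^{-εx}` is a difference of two terms of order `1/ε`
whose singular parts cancel because `a(ε) + b(ε) = B`; what survives comes from the first-order
expansions `e^{-εx} = 1 - εx + O(ε²)` and `t / (1 - e^{-t}) = 1 + t/2 + O(t²)` at `t = ε n q₀`,
and equals the Gabor phase `A m n q₀ p₀ / 2 + B m p₀ + π m x / L`. The amplitude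
`e^{-ε(x + n q₀)/2}` tends to `1` and is at most `e^{L/2}` on the support of `ψ(· + n q₀)`, so
dominated convergence in `L²` applies.
-/

open MeasureTheory Filter Topology

section

open ENNReal

theorem tendsto_Lp_of_tendsto_ae_of_dominated {α E ι : Type*} [MeasurableSpace α]
    {μ : Measure α} [NormedAddCommGroup E] {p : ℝ≥0∞} [Fact (1 ≤ p)] (hp : p ≠ ∞)
    {l : Filter ι} [l.IsCountablyGenerated] {H : ι → Lp E p μ} {h : Lp E p μ}
    {G : ι → α → E} {g : α → E} {bound : α → ℝ}
    (hHG : ∀ᶠ i in l, H i =ᵐ[μ] G i) (hhg : h =ᵐ[μ] g) (hbound : MemLp bound p μ)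
    (hGg : ∀ᶠ i in l, ∀ᵐ x ∂μ, ‖G i x - g x‖ ≤ bound x)
    (hlim : ∀ᵐ x ∂μ, Tendsto (G · x) l (𝓝 (g x))) :
    Tendsto H l (𝓝 h) := by
  have hp0 : p ≠ 0 := (one_pos.trans_le Fact.out).ne'
  have hpr : 0 < p.toReal := toReal_pos hp0 hp
  rw [Lp.tendsto_Lp_iff_tendsto_eLpNorm']
  suffices Tendsto (fun i => ∫⁻ x, ‖G i x - g x‖ₑ ^ p.toReal ∂μ) l (𝓝 0) by
    have hnorm : Tendsto (fun i => eLpNorm (G i - g) p μ) l (𝓝 0) := by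
      simp only [eLpNorm_eq_lintegral_rpow_enorm_toReal hp0 hp]
      convert! continuous_rpow_const.continuousAt.tendsto.comp this
      simp [zero_rpow_of_pos (_root_.inv_pos.mpr hpr)]
    refine hnorm.congr' ?_
    filter_upwards [hHG] with i hi
    exact eLpNorm_congr_ae (hi.sub hhg).symm
  have hmeas : ∀ᶠ i in l, AEMeasurable (fun x => ‖G i x - g x‖ₑ ^ p.toReal) μ := by
    filter_upwards [hHG] with i hi
    have hG := (Lp.aestronglyMeasurable (H i)).congr hi
    have hg := (Lp.aestronglyMeasurable h).congr hhg
    exact (hG.sub hg).enorm.pow_const _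
  have hdom : ∀ᶠ i in l, ∀ᵐ x ∂μ, ‖G i x - g x‖ₑ ^ p.toReal ≤ ‖bound x‖ₑ ^ p.toReal := by
    filter_upwards [hGg] with i hi
    filter_upwards [hi] with x hx
    exact rpow_le_rpow (enorm_le_iff_norm_le.mpr (hx.trans (Real.le_norm_self _))) hpr.le
  have hfin : ∫⁻ x, ‖bound x‖ₑ ^ p.toReal ∂μ ≠ ∞ :=
    (lintegral_rpow_enorm_lt_top_of_eLpNorm_lt_top hp0 hp hbound.eLpNorm_lt_top).ne
  have hzero : ∀ᵐ x ∂μ, Tendsto (fun i => ‖G i x - g x‖ₑ ^ p.toReal) l (𝓝 0) := by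
    filter_upwards [hlim] with x hx
    convert! continuous_rpow_const.continuousAt.tendsto.comp
      ((hx.sub tendsto_const_nhds).enorm)
    simp [zero_rpow_of_pos hpr]
  simpa using tendsto_lintegral_filter_of_dominated_convergence' _ hmeas hdom hfin hzero

theorem tendsto_Lp_of_tendsto_phase_of_tendsto_amplitude {α ι : Type*} [MeasurableSpace α]
    {μ : Measure α} {p : ℝ≥0∞} [Fact (1 ≤ p)] (hp : p ≠ ∞) {l : Filter ι}
    [l.IsCountablyGenerated] {H : ι → Lp ℂ p μ} {h : Lp ℂ p μ} {v : α → ℂ}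
    {θ r : ι → α → ℝ} {θ₀ : α → ℝ} {C : ℝ} (hv : MemLp v p μ)
    (hH : ∀ᶠ i in l, H i =ᵐ[μ] fun x => Complex.exp (Complex.I * θ i x) * r i x * v x)
    (hh : h =ᵐ[μ] fun x => Complex.exp (Complex.I * θ₀ x) * v x)
    (hθ : ∀ᵐ x ∂μ, Tendsto (θ · x) l (𝓝 (θ₀ x)))
    (hr : ∀ᵐ x ∂μ, Tendsto (r · x) l (𝓝 1))
    (hrC : ∀ᶠ i in l, ∀ᵐ x ∂μ, v x ≠ 0 → |r i x| ≤ C) :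
    Tendsto H l (𝓝 h) := by
  have hphase (t : ℝ) : ‖Complex.exp (Complex.I * t)‖ = 1 := by
    rw [mul_comm]; exact Complex.norm_exp_ofReal_mul_I t
  refine tendsto_Lp_of_tendsto_ae_of_dominated hp hH hh (bound := fun x => (C + 1) * ‖v x‖)
    (hv.norm.const_mul _) ?_ ?_
  · filter_upwards [hrC] with i hi
    filter_upwards [hi] with x hx
    rcases eq_or_ne (v x) 0 with hv0 | hv0
    · simp [hv0]
    calc _ ≤ ‖Complex.exp (Complex.I * θ i x) * r i x * v x‖
            + ‖Complex.exp (Complex.I * θ₀ x) * v x‖ := norm_sub_le _ _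
      _ = |r i x| * ‖v x‖ + ‖v x‖ := by simp [hphase]
      _ ≤ (C + 1) * ‖v x‖ := by nlinarith [hx hv0, norm_nonneg (v x)]
  · filter_upwards [hθ, hr] with x hθx hrx
    simpa using (((tendsto_const_nhds.mul hθx.ofReal).cexp).mul hrx.ofReal).mul_const (v x)

end

section

open Real

theorem tendsto_one_sub_exp_neg_mul_div (c : ℝ) :
    Tendsto (fun ε => (1 - exp (-(ε * c))) / ε) (𝓝[>] 0) (𝓝 c) := by
  have h : HasDerivAt (fun ε => 1 - exp (-(ε * c))) c 0 := by
    simpa using (((hasDerivAt_id 0).mul_const c).neg.exp).const_sub 1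
  simpa [div_eq_inv_mul] using h.tendsto_slope_zero_right

theorem tendsto_one_sub_exp_neg_div :
    Tendsto (fun u => (1 - exp (-u)) / u) (𝓝[≠] 0) (𝓝 1) := by
  have h : HasDerivAt (fun u => 1 - exp (-u)) 1 0 := by
    simpa using ((hasDerivAt_neg 0).exp).const_sub 1
  simpa [div_eq_inv_mul] using h.tendsto_slope_zero

theorem tendsto_sinh_mul_div (L : ℝ) :
    Tendsto (fun ε => sinh (ε * L) / ε) (𝓝[>] 0) (𝓝 L) := by
  have h : HasDerivAt (fun ε => sinh (ε * L)) L 0 := by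
    simpa using ((hasDerivAt_id 0).mul_const L).sinh
  simpa [div_eq_inv_mul] using h.tendsto_slope_zero_right

theorem tendsto_exp_neg_sub_one_add_div_sq :
    Tendsto (fun u => (exp (-u) - 1 + u) / u ^ 2) (𝓝[≠] 0) (𝓝 (1 / 2)) := by
  have hneg : Tendsto (fun u : ℝ => -u) (𝓝 0) (𝓝 0) := by simpa using tendsto_neg (0 : ℝ)
  have ho := ((exp_sub_sum_range_succ_isLittleO_pow 2).comp_tendsto hneg).tendsto_div_nhds_zero
  have ho' : Tendsto (fun u => (exp (-u) - 1 + u) / u ^ 2 - 1 / 2) (𝓝[≠] 0) (𝓝 0) := by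
    refine (ho.mono_left nhdsWithin_le_nhds).congr' ?_
    filter_upwards [self_mem_nhdsWithin] with u (hu : u ≠ 0)
    simp only [Function.comp_apply, Finset.sum_range_succ, Finset.sum_range_zero, Nat.factorial,
      Nat.cast_one]
    field_simp
    ring
  have h := ho'.add_const (1 / 2)
  simp only [sub_add_cancel, zero_add] at h
  exact h

theorem tendsto_div_one_sub_exp_neg_sub_one_div :
    Tendsto (fun u => (u / (1 - exp (-u)) - 1) / u) (𝓝[≠] 0) (𝓝 (1 / 2)) := by
  have h := tendsto_exp_neg_sub_one_add_div_sq.div tendsto_one_sub_exp_neg_div one_ne_zero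
  rw [div_one] at h
  refine h.congr' ?_
  filter_upwards [self_mem_nhdsWithin] with u (hu : u ≠ 0)
  simp only [Pi.div_apply]
  have h1 : 1 - exp (-u) ≠ 0 := by
    rw [sub_ne_zero, ne_comm, Ne, exp_eq_one_iff, neg_eq_zero]; exact hu
  field_simp
  ring

theorem tendsto_mul_div_one_sub_exp_neg_sub_one_div {c : ℝ} (hc : c ≠ 0) :
    Tendsto (fun ε => (ε * c / (1 - exp (-(ε * c))) - 1) / ε) (𝓝[>] 0) (𝓝 (c / 2)) := by
  have hmap : Tendsto (fun ε => ε * c) (𝓝[>] 0) (𝓝[≠] 0) := by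
    refine tendsto_nhdsWithin_of_tendsto_nhds_of_eventually_within _ ?_ ?_
    · have h : Tendsto (fun ε => ε * c) (𝓝 0) (𝓝 0) := by
        simpa using (continuous_mul_const c).tendsto 0
      exact h.mono_left nhdsWithin_le_nhds
    · filter_upwards [self_mem_nhdsWithin] with ε (hε : 0 < ε)
      exact mul_ne_zero hε.ne' hc
  have h := (tendsto_div_one_sub_exp_neg_sub_one_div.comp hmap).const_mul c
  rw [mul_one_div] at h
  refine h.congr' ?_
  filter_upwards [self_mem_nhdsWithin] with ε (hε : 0 < ε)
  simp only [Function.comp_apply]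
  field_simp

theorem tendsto_contracted_phase {A L a₀ b₀ c x m : ℝ} {β w : ℝ → ℝ} (hA : A ≠ 0) (hL : L ≠ 0)
    (hβ : ∀ ε, β ε = -exp (-(ε * c)) * π * m / ((b₀ - A / ε) * sinh (ε * L)))
    (hw : Tendsto (fun ε => (w ε - 1) / ε) (𝓝[>] 0) (𝓝 (c / 2))) :
    Tendsto (fun ε => (a₀ + A / ε) * (β ε * w ε) + (b₀ - A / ε) * β ε * exp (-(ε * x)))
      (𝓝[>] 0) (𝓝 (π * m / (A * L) * (a₀ + b₀ + A * c / 2 + A * x))) := by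
  have hε : Tendsto (fun ε : ℝ => ε) (𝓝[>] 0) (𝓝 0) := nhdsWithin_le_nhds
  have hexp (y : ℝ) : Tendsto (fun ε => exp (-(ε * y))) (𝓝[>] 0) (𝓝 1) := by
    simpa using ((hε.mul_const y).neg).rexp
  have hsinh : Tendsto (fun ε => sinh (ε * L)) (𝓝[>] 0) (𝓝 0) := by
    simpa [Function.comp_def] using
      ((continuous_sinh.comp (continuous_mul_const L)).tendsto 0).mono_left nhdsWithin_le_nhds
  have hw1 : Tendsto w (𝓝[>] 0) (𝓝 1) := by
    have h := tendsto_const_nhds (x := (1 : ℝ)).add (hε.mul hw)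
    rw [zero_mul, add_zero] at h
    refine h.congr' ?_
    filter_upwards [self_mem_nhdsWithin] with ε (hpos : 0 < ε)
    field_simp
    ring
  -- this is what keeps `b₀ - A / ε` away from zero for small `ε`
  have hD : Tendsto (fun ε => (b₀ - A / ε) * sinh (ε * L)) (𝓝[>] 0) (𝓝 (-(A * L))) := by
    have h := (hsinh.const_mul b₀).sub ((tendsto_sinh_mul_div L).const_mul A)
    rw [mul_zero, zero_sub] at h
    exact h.congr fun ε => by ring
  -- with `a = a₀ + A/ε`, `b = b₀ - A/ε`, `s = sinh (ε L)`: since `a = (a₀ + b₀) - b`, the phase is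
  -- `-π m e^{-εc} ((a₀ + b₀) w / (b s) - ((w - 1)/ε + (1 - e^{-εx})/ε) / (s/ε))`
  have hΦ := ((hexp c).const_mul (-(π * m))).mul
    (((hw1.const_mul (a₀ + b₀)).div hD (neg_ne_zero.mpr (mul_ne_zero hA hL))).sub
      ((hw.add (tendsto_one_sub_exp_neg_mul_div x)).div (tendsto_sinh_mul_div L) hL))
  convert hΦ.congr' ?_ using 2
  · field_simp
    ring
  filter_upwards [self_mem_nhdsWithin, hD.eventually_ne (neg_ne_zero.mpr (mul_ne_zero hA hL))]
    with ε (hpos : 0 < ε) hDε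
  have hs : sinh (ε * L) ≠ 0 := by
    simpa using mul_ne_zero hpos.ne' hL
  have hb : ε * b₀ - A ≠ 0 := by
    have h := left_ne_zero_of_mul hDε
    contrapose! h
    field_simp
    linear_combination h
  simp only [Pi.div_apply, hβ]
  field_simp
  ring

theorem abs_exp_neg_mul_div_two_le {ε y L : ℝ} (hε : ε ∈ Set.Ioc 0 1) (hy : |y| ≤ L) :
    |exp (-(ε * y / 2))| ≤ exp (L / 2) := by
  rw [abs_exp, exp_le_exp]
  nlinarith [neg_abs_le y, abs_nonneg y, hε.1, hε.2]

theorem tendsto_contracted_frame_element {A B L q₀ p₀ a₀ b₀ : ℝ} {n m : ℤ} (hA : A ≠ 0)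
    (hL : L ≠ 0)
    (hq₀ : q₀ ≠ 0) (hp₀ : p₀ = π / (A * L)) (hab : a₀ + b₀ = B)
    {ψ : Lp ℂ 2 (volume : Measure ℝ)} (hsupp : ∀ᵐ x : ℝ ∂volume, L < |x| → ψ x = 0)
    {β γ : ℝ → ℝ}
    (hβ : ∀ ε, β ε = -exp (-(ε * n * q₀)) * π * m / ((b₀ - A / ε) * sinh (ε * L)))
    (hγ : n ≠ 0 → ∀ ε, γ ε = β ε * (ε * n * q₀) / (1 - exp (-(ε * n * q₀))))
    (hγ₀ : n = 0 → ∀ ε, γ ε = β ε)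
    {Ψ : Lp ℂ 2 (volume : Measure ℝ)} {Ψε : ℝ → Lp ℂ 2 (volume : Measure ℝ)}
    (hΨ : ⇑Ψ =ᵐ[volume] fun x : ℝ =>
      Complex.exp (Complex.I * Complex.ofReal (A * m * n * q₀ * p₀ / 2)) *
      Complex.exp (Complex.I * Complex.ofReal (B * m * p₀)) *
      Complex.exp (Complex.I * Complex.ofReal (π * m * x / L)) *
      ψ (x + n * q₀))
    (hΨε : ∀ ε ∈ Set.Ioc (0:ℝ) 1, ⇑(Ψε ε) =ᵐ[volume] fun x : ℝ =>
      Complex.exp (Complex.I * Complex.ofReal ((a₀ + A / ε) * γ ε)) *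
      Complex.exp (Complex.I * Complex.ofReal ((b₀ - A / ε) * β ε * exp (-(ε * x)))) *
      Complex.ofReal (exp (-(ε * (x + n * q₀) / 2))) *
      ψ (x + n * q₀)) :
    Tendsto Ψε (𝓝[>] 0) (𝓝 Ψ) := by
  set c : ℝ := n * q₀
  obtain ⟨w, hγw, hw⟩ : ∃ w : ℝ → ℝ, (∀ ε, γ ε = β ε * w ε) ∧
      Tendsto (fun ε => (w ε - 1) / ε) (𝓝[>] 0) (𝓝 (c / 2)) := by
    rcases eq_or_ne n 0 with rfl | hn
    · refine ⟨1, fun ε => by simp [hγ₀ rfl ε], ?_⟩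
      simp [c]
    · refine ⟨fun ε => ε * c / (1 - exp (-(ε * c))), fun ε => ?_,
        tendsto_mul_div_one_sub_exp_neg_sub_one_div (mul_ne_zero (Int.cast_ne_zero.mpr hn) hq₀)⟩
      simp only [hγ hn ε, c, mul_assoc, mul_div_assoc]
  have hθ (x : ℝ) : Tendsto (fun ε => (a₀ + A / ε) * γ ε + (b₀ - A / ε) * β ε * exp (-(ε * x)))
      (𝓝[>] 0) (𝓝 (A * m * n * q₀ * p₀ / 2 + B * m * p₀ + π * m * x / L)) := by
    have h := tendsto_contracted_phase (a₀ := a₀) (b₀ := b₀) (c := c) (x := x) (m := m) (β := β)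
      hA hL
      (fun ε => by rw [hβ, mul_assoc ε]) hw
    simp only [← hγw] at h
    convert h using 2
    rw [hp₀, ← hab]
    field_simp
    ring
  have hIoc : Set.Ioc (0:ℝ) 1 ∈ 𝓝[>] 0 := Ioc_mem_nhdsGT one_pos
  refine tendsto_Lp_of_tendsto_phase_of_tendsto_amplitude (C := exp (L / 2))
    (r := fun ε x => exp (-(ε * (x + c) / 2))) ENNReal.ofNat_ne_top
    ((Lp.memLp ψ).comp_measurePreserving (measurePreserving_add_right volume c)) ?_ ?_
    (.of_forall hθ) (.of_forall fun x => ?_) ?_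
  · filter_upwards [hIoc] with ε hε
    filter_upwards [hΨε ε hε] with x hx
    simp only [hx, Function.comp_apply, Complex.ofReal_add, mul_add, Complex.exp_add]
  · filter_upwards [hΨ] with x hx
    simp only [hx, Function.comp_apply, Complex.ofReal_add, mul_add, Complex.exp_add]
  · simpa using (((tendsto_id (x := 𝓝 (0 : ℝ))).mul_const (x + c)).div_const 2).neg.rexp.mono_left
      nhdsWithin_le_nhds
  · filter_upwards [hIoc] with ε hε
    filter_upwards [(measurePreserving_add_right volume c).quasiMeasurePreserving.ae hsupp]
      with x hx hx0
    exact abs_exp_neg_mul_div_two_le hε (not_lt.mp (mt hx hx0))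

end

theorem contraction_of_truncated_frame_expansions_general
    (A B L q₀ p₀ χ : ℝ)
    (hA : A ≠ 0) (hL : 0 < L) (hq₀ : q₀ ≠ 0)
    (hp₀ : p₀ = Real.pi / (A * L))
    (ψ : Lp ℂ 2 (volume : Measure ℝ))
    (hsupp : ∀ᵐ x : ℝ ∂volume, L < |x| → ψ x = 0)
    (ψAB : ℤ → ℤ → Lp ℂ 2 (volume : Measure ℝ))
    (hψAB : ∀ n m : ℤ, ⇑(ψAB n m) =ᵐ[volume] fun x : ℝ =>
      Complex.exp (Complex.I * Complex.ofReal (A * m * n * q₀ * p₀ / 2)) *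
      Complex.exp (Complex.I * Complex.ofReal (B * m * p₀)) *
      Complex.exp (Complex.I * Complex.ofReal (Real.pi * m * x / L)) *
      ψ (x + n * q₀))
    (a₀ b₀ : ℝ) (hab : a₀ + b₀ = B)
    (β γ : ℝ → ℤ → ℤ → ℝ)
    (hβ : ∀ (ε : ℝ) (n m : ℤ), β ε n m =
      -Real.exp (-(ε * n * q₀)) * Real.pi * m / ((b₀ - A / ε) * Real.sinh (ε * L)))
    (hγ : ∀ (ε : ℝ) (n m : ℤ), n ≠ 0 → γ ε n m =
      β ε n m * (ε * n * q₀) / (1 - Real.exp (-(ε * n * q₀))))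
    (hγ₀ : ∀ (ε : ℝ) (m : ℤ), γ ε 0 m = β ε 0 m)
    (ψe : ℝ → ℤ → ℤ → Lp ℂ 2 (volume : Measure ℝ))
    (hψe : ∀ ε ∈ Set.Ioc (0:ℝ) 1, ∀ n m : ℤ, ⇑(ψe ε n m) =ᵐ[volume] fun x : ℝ =>
      Complex.exp (Complex.I * Complex.ofReal ((a₀ + A / ε) * γ ε n m)) *
      Complex.exp (Complex.I * Complex.ofReal ((b₀ - A / ε) * β ε n m * Real.exp (-(ε * x)))) *
      Complex.ofReal (Real.exp (-(ε * (x + n * q₀) / 2))) *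
      ψ (x + n * q₀))
    (f : Lp ℂ 2 (volume : Measure ℝ)) (N₁ N₂ M₁ M₂ : ℤ) :
    Filter.Tendsto (fun ε : ℝ =>
        ∑ n ∈ Finset.Icc N₁ N₂, ∑ m ∈ Finset.Icc M₁ M₂,
          (Complex.ofReal (ε / (2 * χ * Real.sinh (ε * L)))) •
            ((inner ℂ (ψe ε n m) f : ℂ) • ψe ε n m))
      (𝓝[>] (0:ℝ))
      (𝓝 (∑ n ∈ Finset.Icc N₁ N₂, ∑ m ∈ Finset.Icc M₁ M₂,
          (Complex.ofReal (1 / (2 * χ * L))) •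
            ((inner ℂ (ψAB n m) f : ℂ) • ψAB n m))) := by
  have hscal : Tendsto (fun ε : ℝ => Complex.ofReal (ε / (2 * χ * Real.sinh (ε * L))))
      (𝓝[>] 0) (𝓝 (Complex.ofReal (1 / (2 * χ * L)))) := by
    have h := ((tendsto_sinh_mul_div L).inv₀ hL.ne').div_const (2 * χ)
    convert h.ofReal using 3 with ε
    · rw [inv_div, div_div, mul_comm]
    · rw [one_div, div_eq_inv_mul, mul_inv, mul_comm]
  have helement (n m : ℤ) : Tendsto (fun ε => ψe ε n m) (𝓝[>] 0) (𝓝 (ψAB n m)) :=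
    tendsto_contracted_frame_element hA hL.ne' hq₀ hp₀ hab hsupp (hβ · n m)
      (fun hn ε => hγ ε n m hn) (by rintro rfl ε; exact hγ₀ ε m) (hψAB n m)
      (fun ε hε => hψe ε hε n m)
  exact tendsto_finsetSum _ fun n _ => tendsto_finsetSum _ fun m _ =>
    hscal.smul (((helement n m).inner tendsto_const_nhds).smul (helement n m))

theorem contraction_of_truncated_frame_expansions
    (A B L q₀ p₀ χ : ℝ)
    (hA : A ≠ 0) (hL : 0 < L) (hq₀ : q₀ ≠ 0) (hχ : 0 < χ)
    (hp₀ : p₀ = Real.pi / (A * L))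
    (hq₀p₀ : |q₀ * p₀| < 2 * Real.pi)
    (ψ : Lp ℂ 2 (volume : Measure ℝ)) (hψ : ψ ≠ 0)
    (hsupp : ∀ᵐ x : ℝ ∂volume, L < |x| → ψ x = 0)
    (hχsum : ∀ᵐ x : ℝ ∂volume, ∑' n : ℤ, ‖ψ (x + n * q₀)‖ ^ 2 = χ)
    (ψAB : ℤ → ℤ → Lp ℂ 2 (volume : Measure ℝ))
    (hψAB : ∀ n m : ℤ, ⇑(ψAB n m) =ᵐ[volume] fun x : ℝ =>
      Complex.exp (Complex.I * Complex.ofReal (A * m * n * q₀ * p₀ / 2)) *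
      Complex.exp (Complex.I * Complex.ofReal (B * m * p₀)) *
      Complex.exp (Complex.I * Complex.ofReal (Real.pi * m * x / L)) *
      ψ (x + n * q₀))
    (a₀ b₀ : ℝ) (hab : a₀ + b₀ = B)
    (hb : ∀ ε ∈ Set.Ioc (0:ℝ) 1, b₀ - A / ε ≠ 0)
    (β γ : ℝ → ℤ → ℤ → ℝ)
    (hβ : ∀ (ε : ℝ) (n m : ℤ), β ε n m =
      -Real.exp (-(ε * n * q₀)) * Real.pi * m / ((b₀ - A / ε) * Real.sinh (ε * L)))
    (hγ : ∀ (ε : ℝ) (n m : ℤ), n ≠ 0 → γ ε n m =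
      β ε n m * (ε * n * q₀) / (1 - Real.exp (-(ε * n * q₀))))
    (hγ₀ : ∀ (ε : ℝ) (m : ℤ), γ ε 0 m = β ε 0 m)
    (ψe : ℝ → ℤ → ℤ → Lp ℂ 2 (volume : Measure ℝ))
    (hψe : ∀ ε ∈ Set.Ioc (0:ℝ) 1, ∀ n m : ℤ, ⇑(ψe ε n m) =ᵐ[volume] fun x : ℝ =>
      Complex.exp (Complex.I * Complex.ofReal ((a₀ + A / ε) * γ ε n m)) *
      Complex.exp (Complex.I * Complex.ofReal ((b₀ - A / ε) * β ε n m * Real.exp (-(ε * x)))) *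
      Complex.ofReal (Real.exp (-(ε * (x + n * q₀) / 2))) *
      ψ (x + n * q₀))
    (f : Lp ℂ 2 (volume : Measure ℝ)) (N₁ N₂ M₁ M₂ : ℤ) (hN : N₁ ≤ N₂) (hM : M₁ ≤ M₂) :
    Filter.Tendsto (fun ε : ℝ =>
        ∑ n ∈ Finset.Icc N₁ N₂, ∑ m ∈ Finset.Icc M₁ M₂,
          (Complex.ofReal (ε / (2 * χ * Real.sinh (ε * L)))) •
            ((inner ℂ (ψe ε n m) f : ℂ) • ψe ε n m))
      (𝓝[>] (0:ℝ))
      (𝓝 (∑ n ∈ Finset.Icc N₁ N₂, ∑ m ∈ Finset.Icc M₁ M₂,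
          (Complex.ofReal (1 / (2 * χ * L))) •
            ((inner ℂ (ψAB n m) f : ℂ) • ψAB n m))) :=
  contraction_of_truncated_frame_expansions_general A B L q₀ p₀ χ hA hL hq₀ hp₀ ψ hsupp ψAB hψAB a₀
    b₀ hab β γ hβ hγ hγ₀ ψe hψe f N₁ N₂ M₁ M₂
end

section
/- (Contraction of coherent states.) For every (q,p) ∈ ℝ²: for every x ∈ ℝ, lim_{ε→0⁺} ψ_ε^{a(ε),b(ε)}(q,p)(x) = exp(i·(A·(q·p/2 + x·p) + B·p))·ψ(x + q), and moreover ψ_ε^{a(ε),b(ε)}(q,p) converges as ε → 0⁺ in the norm of L²(ℝ) to the function x ↦ exp(i·(A·(q·p/2 + x·p) + B·p))·ψ(x + q). -/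
/-!
For `ε ≠ 0` one has `D_ε(q) = D_1(εq)`, and `D_1` is differentiable at `0` with `D_1'(0) = -1/2`
(the second-order Taylor coefficient of `exp`). So `F(ε) = D_ε(q) e^{-εx}` satisfies `F(0) = 1`
and `F'(0) = -(q/2 + x)`, and in the phase
`(a₀ + A/ε) p + (b₀ - A/ε) p F(ε) = p (a₀ + b₀ F(ε)) - A p (F(ε) - 1)/ε`
the divergent terms combine into a difference quotient of `F`, which converges to
`(a₀ + b₀) p + A p (q/2 + x)`. Since all phase factors are unimodular, the `L²` convergence
follows from the pointwise one by dominated convergence, with dominating function `2 |ψ(x + q)|`.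
-/

open MeasureTheory Filter Topology

/-- `D_ε(c) = (exp(−εc) − 1)/(−εc)` for `c ≠ 0`, `D_ε(0) = 1`. -/
noncomputable def Dfun (ε c : ℝ) : ℝ :=
  if c = 0 then 1 else (Real.exp (-(ε * c)) - 1) / (-(ε * c))

open scoped ENNReal

theorem tendsto_div_sq_of_hasDerivAt {f f' : ℝ → ℝ} {c : ℝ} (hf : ∀ x, HasDerivAt f (f' x) x)
    (hf' : HasDerivAt f' c 0) (hf0 : f 0 = 0) (hf'0 : f' 0 = 0) :
    Tendsto (fun x => f x / x ^ 2) (𝓝[≠] 0) (𝓝 (c / 2)) := by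
  have hslope : Tendsto (fun x => f' x / (2 * x)) (𝓝[≠] 0) (𝓝 (c / 2)) := by
    refine (hf'.tendsto_slope_zero.div_const 2).congr fun x => ?_
    simp only [zero_add, hf'0, sub_zero, smul_eq_mul]
    ring
  refine HasDerivAt.lhopital_zero_nhdsNE (.of_forall fun x => hf x)
    (.of_forall fun x => by simpa using hasDerivAt_pow 2 x) ?_ ?_ ?_ hslope
  · filter_upwards [self_mem_nhdsWithin] with x hx
    exact mul_ne_zero two_ne_zero hx
  · simpa [hf0] using (hf 0).continuousAt.tendsto.mono_left nhdsWithin_le_nhds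
  · exact tendsto_nhdsWithin_of_tendsto_nhds (by simpa using (continuous_pow 2).tendsto (0 : ℝ))

theorem hasDerivAt_Dfun_one_zero : HasDerivAt (Dfun 1) (-1 / 2) 0 := by
  have hexp : ∀ x : ℝ, HasDerivAt (fun t => Real.exp (-t)) (-Real.exp (-x)) x := fun x => by
    simpa using (hasDerivAt_neg x).exp
  have hquad := tendsto_div_sq_of_hasDerivAt (f := fun t => Real.exp (-t) - 1 + t)
    (f' := fun t => 1 - Real.exp (-t)) (c := 1)
    (fun x => by
      rw [show 1 - Real.exp (-x) = -Real.exp (-x) + 1 by ring]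
      exact ((hexp x).sub_const 1).add (hasDerivAt_id' x))
    (by simpa using (hexp 0).const_sub 1) (by simp) (by simp)
  rw [hasDerivAt_iff_tendsto_slope_zero]
  refine (hquad.neg.congr' ?_).trans (by norm_num)
  filter_upwards [self_mem_nhdsWithin] with t (ht : t ≠ 0)
  simp only [Dfun, zero_add, if_neg ht, ↓reduceIte, one_mul, smul_eq_mul]
  field_simp
  ring

theorem Dfun_eq_Dfun_one_mul {ε : ℝ} (hε : ε ≠ 0) (q : ℝ) : Dfun ε q = Dfun 1 (ε * q) := by
  by_cases hq : q = 0
  · simp [Dfun, hq]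
  · simp [Dfun, hq, hε]

theorem tendsto_add_div_add_sub_div_mul {F : ℝ → ℝ} {d : ℝ} (hF : HasDerivAt F d 0)
    (hF0 : F 0 = 1) (a b A : ℝ) :
    Tendsto (fun ε => (a + A / ε) + (b - A / ε) * F ε) (𝓝[≠] 0) (𝓝 (a + b - A * d)) := by
  have hcont : Tendsto F (𝓝[≠] 0) (𝓝 1) :=
    hF0 ▸ hF.continuousAt.tendsto.mono_left nhdsWithin_le_nhds
  have hslope := hasDerivAt_iff_tendsto_slope_zero.1 hF
  have := ((tendsto_const_nhds (x := a)).add (hcont.const_mul b)).sub (hslope.const_mul A)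
  rw [mul_one] at this
  refine this.congr' ?_
  filter_upwards [self_mem_nhdsWithin] with ε (hε : ε ≠ 0)
  simp only [zero_add, hF0, smul_eq_mul]
  field_simp
  ring

theorem tendsto_eLpNorm_of_dominated {ι α E : Type*} [MeasurableSpace α] {μ : Measure α}
    [NormedAddCommGroup E] {p : ℝ≥0∞} {l : Filter ι} [l.IsCountablyGenerated] {F : ι → α → E}
    {bound : α → ℝ} (hp0 : p ≠ 0) (hp : p ≠ ∞) (hbound : MemLp bound p μ)
    (hF_meas : ∀ᶠ i in l, AEStronglyMeasurable (F i) μ)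
    (h_bound : ∀ᶠ i in l, ∀ᵐ x ∂μ, ‖F i x‖ ≤ bound x)
    (h_lim : ∀ᵐ x ∂μ, Tendsto (fun i => F i x) l (𝓝 0)) :
    Tendsto (fun i => eLpNorm (F i) p μ) l (𝓝 0) := by
  have hp_pos : 0 < p.toReal := ENNReal.toReal_pos hp0 hp
  have hrpow {r : ℝ} (hr : 0 < r) {g : ι → ℝ≥0∞} (hg : Tendsto g l (𝓝 0)) :
      Tendsto (fun i => g i ^ r) l (𝓝 0) := by
    simpa [Function.comp_def, ENNReal.zero_rpow_of_pos hr] using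
      (ENNReal.continuous_rpow_const (y := r) |>.tendsto 0).comp hg
  have hlint : Tendsto (fun i => ∫⁻ x, ‖F i x‖ₑ ^ p.toReal ∂μ) l (𝓝 0) := by
    simpa using tendsto_lintegral_filter_of_dominated_convergence' (f := fun _ => 0)
      (fun x => ‖bound x‖ₑ ^ p.toReal) (hF_meas.mono fun i h => h.enorm.pow_const _)
      (h_bound.mono fun i h => h.mono fun x hx =>
        ENNReal.rpow_le_rpow (enorm_le_iff_norm_le.2 (hx.trans (le_abs_self _))) hp_pos.le)
      (lintegral_rpow_enorm_lt_top_of_eLpNorm_lt_top hp0 hp hbound.2).ne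
      (h_lim.mono fun x hx => hrpow hp_pos <| by
        simpa [Function.comp_def] using (continuous_enorm.tendsto 0).comp hx)
  simp_rw [eLpNorm_eq_lintegral_rpow_enorm_toReal hp0 hp]
  exact hrpow (one_div_pos.2 hp_pos) hlint

theorem tendsto_eLpNorm_mul_sub_mul {ι α R : Type*} [MeasurableSpace α] {μ : Measure α}
    [NormedRing R] {p : ℝ≥0∞} {l : Filter ι} [l.IsCountablyGenerated] {u : ι → α → R}
    {v f : α → R} (hp0 : p ≠ 0) (hp : p ≠ ∞) (hf : MemLp f p μ)
    (hu_meas : ∀ i, AEStronglyMeasurable (u i) μ) (hv_meas : AEStronglyMeasurable v μ)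
    (hu : ∀ i x, ‖u i x‖ ≤ 1) (hv : ∀ x, ‖v x‖ ≤ 1)
    (hlim : ∀ x, Tendsto (fun i => u i x) l (𝓝 (v x))) :
    Tendsto (fun i => eLpNorm (fun x => u i x * f x - v x * f x) p μ) l (𝓝 0) := by
  refine tendsto_eLpNorm_of_dominated (bound := fun x => 2 * ‖f x‖) hp0 hp (hf.norm.const_mul 2)
    (.of_forall fun i => ((hu_meas i).mul hf.1).sub (hv_meas.mul hf.1))
    (.of_forall fun i => .of_forall fun x => ?_)
    (.of_forall fun x => by simpa using ((hlim x).mul_const (f x)).sub_const (v x * f x))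
  calc ‖u i x * f x - v x * f x‖ = ‖(u i x - v x) * f x‖ := by rw [sub_mul]
    _ ≤ ‖u i x - v x‖ * ‖f x‖ := norm_mul_le _ _
    _ ≤ (‖u i x‖ + ‖v x‖) * ‖f x‖ := by gcongr; exact norm_sub_le _ _
    _ ≤ 2 * ‖f x‖ := by gcongr; linarith [hu i x, hv x]

theorem tendsto_coherentState_phase (A a₀ b₀ q p x : ℝ) :
    Tendsto (fun ε : ℝ => (a₀ + A / ε) * p + (b₀ - A / ε) * p * Dfun ε q * Real.exp (-(ε * x)))
      (𝓝[>] 0) (𝓝 (A * (q * p / 2 + x * p) + (a₀ + b₀) * p)) := by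
  have hF : HasDerivAt (fun ε => Dfun 1 (ε * q) * Real.exp (-(ε * x))) (-(q / 2 + x)) 0 := by
    refine ((hasDerivAt_Dfun_one_zero.comp_of_eq 0 (hasDerivAt_mul_const q) (zero_mul q).symm).mul
      (hasDerivAt_mul_const x).neg.exp).congr_deriv ?_
    simp [Dfun]
    ring
  have hlim := ((tendsto_add_div_add_sub_div_mul hF (by simp [Dfun]) a₀ b₀ A).mul_const
    p).mono_left (nhdsGT_le_nhdsNE 0)
  rw [show (a₀ + b₀ - A * -(q / 2 + x)) * p = A * (q * p / 2 + x * p) + (a₀ + b₀) * p by ring]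
    at hlim
  refine hlim.congr' ?_
  filter_upwards [self_mem_nhdsWithin] with ε (hε : 0 < ε)
  rw [Dfun_eq_Dfun_one_mul hε.ne']
  ring

theorem tendsto_coherentState_factor (A a₀ b₀ q p x : ℝ) :
    Tendsto (fun ε : ℝ => Complex.exp (Complex.I * Complex.ofReal ((a₀ + A / ε) * p)) *
        Complex.exp (Complex.I *
          Complex.ofReal ((b₀ - A / ε) * p * Dfun ε q * Real.exp (-(ε * x)))))
      (𝓝[>] 0) (𝓝 (Complex.exp (Complex.I *
        Complex.ofReal (A * (q * p / 2 + x * p) + (a₀ + b₀) * p)))) := by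
  simp_rw [← Complex.exp_add, ← mul_add, ← Complex.ofReal_add]
  have hexp : Continuous fun t : ℝ => Complex.exp (Complex.I * t) := by fun_prop
  exact (hexp.tendsto _).comp (tendsto_coherentState_phase A a₀ b₀ q p x)

theorem contraction_of_coherent_states_general
    (A B a₀ b₀ : ℝ) (hab : a₀ + b₀ = B)
    (ψ : ℝ → ℂ) (hmem : MemLp ψ 2 (volume : Measure ℝ)) (q p : ℝ) :
    (∀ x : ℝ, Filter.Tendsto (fun ε : ℝ =>
        Complex.exp (Complex.I * Complex.ofReal ((a₀ + A / ε) * p)) *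
        Complex.exp (Complex.I *
          Complex.ofReal ((b₀ - A / ε) * p * Dfun ε q * Real.exp (-(ε * x)))) *
        ψ (x + q))
      (𝓝[>] (0:ℝ))
      (𝓝 (Complex.exp (Complex.I * Complex.ofReal (A * (q * p / 2 + x * p) + B * p)) *
        ψ (x + q)))) ∧
    Filter.Tendsto (fun ε : ℝ =>
        eLpNorm (fun x : ℝ =>
          Complex.exp (Complex.I * Complex.ofReal ((a₀ + A / ε) * p)) *
          Complex.exp (Complex.I *
            Complex.ofReal ((b₀ - A / ε) * p * Dfun ε q * Real.exp (-(ε * x)))) *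
          ψ (x + q) -
          Complex.exp (Complex.I * Complex.ofReal (A * (q * p / 2 + x * p) + B * p)) *
          ψ (x + q)) 2 volume)
      (𝓝[>] (0:ℝ)) (𝓝 0) := by
  subst hab
  refine ⟨fun x => (tendsto_coherentState_factor A a₀ b₀ q p x).mul_const _, ?_⟩
  refine tendsto_eLpNorm_mul_sub_mul two_ne_zero ENNReal.ofNat_ne_top
    (hmem.comp_measurePreserving (measurePreserving_add_right volume q))
    (fun ε => by fun_prop) (by fun_prop)
    (fun ε x => by simp only [norm_mul, Complex.norm_exp_I_mul_ofReal, mul_one, le_refl])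
    (fun x => (Complex.norm_exp_I_mul_ofReal _).le)
    (tendsto_coherentState_factor A a₀ b₀ q p)

theorem contraction_of_coherent_states
    (A B a₀ b₀ : ℝ) (hA : A ≠ 0) (hab : a₀ + b₀ = B)
    (ψ : ℝ → ℂ) (hmem : MemLp ψ 2 (volume : Measure ℝ)) (q p : ℝ) :
    (∀ x : ℝ, Filter.Tendsto (fun ε : ℝ =>
        Complex.exp (Complex.I * Complex.ofReal ((a₀ + A / ε) * p)) *
        Complex.exp (Complex.I *
          Complex.ofReal ((b₀ - A / ε) * p * Dfun ε q * Real.exp (-(ε * x)))) *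
        ψ (x + q))
      (𝓝[>] (0:ℝ))
      (𝓝 (Complex.exp (Complex.I * Complex.ofReal (A * (q * p / 2 + x * p) + B * p)) *
        ψ (x + q)))) ∧
    Filter.Tendsto (fun ε : ℝ =>
        eLpNorm (fun x : ℝ =>
          Complex.exp (Complex.I * Complex.ofReal ((a₀ + A / ε) * p)) *
          Complex.exp (Complex.I *
            Complex.ofReal ((b₀ - A / ε) * p * Dfun ε q * Real.exp (-(ε * x)))) *
          ψ (x + q) -
          Complex.exp (Complex.I * Complex.ofReal (A * (q * p / 2 + x * p) + B * p)) *
          ψ (x + q)) 2 volume)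
      (𝓝[>] (0:ℝ)) (𝓝 0) :=
  contraction_of_coherent_states_general A B a₀ b₀ hab ψ hmem q p
end
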